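/- For every s ∈ ℝ^m and every real t ≠ 0, the kernel of the derivative Df̃_{((0,0,0,s),t)} : ℝ^n × ℝ → ℝ^{n+k} is exactly the one-dimensional span of the vector (0, 1) (the t-coordinate direction). -/

import Mathlib

noncomputable section

open scoped RealInnerProductSpace

/-- Index type for the domain `ℝⁿ`, `n = 2k+2+m`: coordinates `x` (2k of them),
`y`, `z`, and `s` (m of them). -/
abbrev DomIx (k m : ℕ) := (Fin (2*k)) ⊕ Unit ⊕ Unit ⊕ (Fin m)

/-- The domain `ℝⁿ` with its Euclidean inner product. -/
abbrev Dom (k m : ℕ) := EuclideanSpace ℝ (DomIx k m)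

/-- Index type for the codomain `ℝ^{n+k}`: coordinates `X` (2k+1), `Y` (k), `Z`, `S` (m). -/
abbrev CodIx (k m : ℕ) := (Fin (2*k+1)) ⊕ (Fin k) ⊕ Unit ⊕ (Fin m)

/-- The codomain `ℝ^{n+k}` with its Euclidean inner product. -/
abbrev Cod (k m : ℕ) := EuclideanSpace ℝ (CodIx k m)

/-- The `x`-coordinates of a point (0-based: `px p j` is `x_{j+1}`). -/
def px {k m : ℕ} (p : Dom k m) (j : Fin (2*k)) : ℝ := p (Sum.inl j)

/-- The `y`-coordinate of a point. -/
def py {k m : ℕ} (p : Dom k m) : ℝ := p (Sum.inr (Sum.inl ()))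

/-- The `z`-coordinate of a point. -/
def pz {k m : ℕ} (p : Dom k m) : ℝ := p (Sum.inr (Sum.inr (Sum.inl ())))

/-- The `s`-coordinates of a point. -/
def ps {k m : ℕ} (p : Dom k m) (j : Fin m) : ℝ := p (Sum.inr (Sum.inr (Sum.inr j)))

/-- The (0-based) index of the coordinate `x_{2i-1}` (1-based), for `i : Fin k` (0-based). -/
def xo {k : ℕ} (i : Fin k) : Fin (2*k) := ⟨2*i.1, by have := i.isLt; omega⟩

/-- The (0-based) index of the coordinate `x_{2i}` (1-based), for `i : Fin k` (0-based). -/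
def xe {k : ℕ} (i : Fin k) : Fin (2*k) := ⟨2*i.1+1, by have := i.isLt; omega⟩

/-- The cusp normal form `f : ℝⁿ → ℝ^{n+k}`:
`X_i = x_i`, `X_{2k+1} = y`, `Y_i = z x_{2i-1} + z² x_{2i}`, `Z = z y + z³`, `S_j = s_j`. -/
def cuspF (k m : ℕ) (p : Dom k m) : Cod k m :=
  (EuclideanSpace.equiv (CodIx k m) ℝ).symm fun q =>
    match q with
    | Sum.inl j => if h : j.1 < 2*k then px p ⟨j.1, h⟩ else py p
    | Sum.inr (Sum.inl i) => pz p * px p (xo i) + (pz p)^2 * px p (xe i)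
    | Sum.inr (Sum.inr (Sum.inl _)) => pz p * py p + (pz p)^3
    | Sum.inr (Sum.inr (Sum.inr j)) => ps p j

/-- The singular set `Σ(f)` of the cusp normal form:
`x_{2i-1} + 2 z x_{2i} = 0` for all `i` and `y + 3z² = 0`. -/
def SingSet (k m : ℕ) : Set (Dom k m) :=
  {p | (∀ i : Fin k, px p (xo i) + 2 * pz p * px p (xe i) = 0) ∧ py p + 3 * (pz p)^2 = 0}

/-- The standard basis vector `e_z` of the domain. -/
def ez (k m : ℕ) : Dom k m := EuclideanSpace.single (Sum.inr (Sum.inr (Sum.inl ()))) 1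


/-- The section `σ : ℝⁿ → ℝ^{n+k}` given coordinatewise (1-based, `1 ≤ i ≤ k`) by
`σ_{X_{2i−1}} = −2z x_{2i}/(1+z²+z⁴)`, `σ_{X_{2i}} = −2z² x_{2i}/(1+z²+z⁴)`,
`σ_{X_{2k+1}} = −6z²/(1+z²)`, `σ_{Y_i} = 2x_{2i}/(1+z²+z⁴)`, `σ_Z = 6z/(1+z²)`, `σ_{S_j} = 0`. -/
def sigmaF (k m : ℕ) (p : Dom k m) : Cod k m :=
  (EuclideanSpace.equiv (CodIx k m) ℝ).symm fun q =>
    match q with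
    | Sum.inl j =>
        if h : j.1 < 2*k then
          if h2 : j.1 % 2 = 0 then
            -- the coordinate `X_{2i-1}` (1-based) with `2i-1 = j.1+1`, so `x_{2i} = x`-coord `j.1+1`
            -2 * pz p * px p ⟨j.1+1, by omega⟩ / (1 + (pz p)^2 + (pz p)^4)
          else
            -- the coordinate `X_{2i}` (1-based) with `2i = j.1+1`, so `x_{2i} = x`-coord `j.1`
            -2 * (pz p)^2 * px p ⟨j.1, h⟩ / (1 + (pz p)^2 + (pz p)^4)
        else
          -- the coordinate `X_{2k+1}`
          -6 * (pz p)^2 / (1 + (pz p)^2)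
    | Sum.inr (Sum.inl i) => 2 * px p (xe i) / (1 + (pz p)^2 + (pz p)^4)
    | Sum.inr (Sum.inr (Sum.inl _)) => 6 * pz p / (1 + (pz p)^2)
    | Sum.inr (Sum.inr (Sum.inr _)) => 0

/-- The de-suspension `f̃ : ℝⁿ × ℝ → ℝ^{n+k}`, `f̃(p, t) = f(p) + t σ(p)`. -/
def ftilde (k m : ℕ) (q : Dom k m × ℝ) : Cod k m :=
  cuspF k m q.1 + q.2 • sigmaF k m q.1

/-- The point `(0, 0, 0, s) ∈ ℝⁿ`. -/
def pOfS (k m : ℕ) (s : Fin m → ℝ) : Dom k m :=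
  (EuclideanSpace.equiv (DomIx k m) ℝ).symm fun q =>
    match q with
    | Sum.inl _ => 0
    | Sum.inr (Sum.inl _) => 0
    | Sum.inr (Sum.inr (Sum.inl _)) => 0
    | Sum.inr (Sum.inr (Sum.inr j)) => s j

/-!
At `p₀ = (0,0,0,s)` the section `σ` vanishes, so `Df̃_{(p₀,t)}(v, τ) = (Df + t Dσ)_{p₀} v`
and the whole `t`-direction lies in the kernel. It remains to see that `Df + t Dσ` is injective
at `p₀` for `t ≠ 0`. The `X`- and `S`-components of `f` are coordinates, while `f_Z = z (y + z²)`
and each `X`-component of `σ` is `z` times a function vanishing at `p₀`, so these have zero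
derivative there; finally `σ_Z = z · 6/(1 + z²)` has derivative `6 dz`. Hence the `X`-, `Z`- and
`S`-components of `(Df + t Dσ) v` are `(v_x, v_y)`, `6 t v_z` and `v_s`.
-/

section Calculus

variable {𝕜 E F : Type*} [NontriviallyNormedField 𝕜] [NormedAddCommGroup E] [NormedSpace 𝕜 E]
  [NormedAddCommGroup F] [NormedSpace 𝕜 F]

theorem HasFDerivAt.add_smul_of_eq_zero {f σ : E → F} {f' σ' : E →L[𝕜] F} {p : E}
    (hf : HasFDerivAt f f' p) (hσ : HasFDerivAt σ σ' p) (hσp : σ p = 0) (t : 𝕜) :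
    HasFDerivAt (fun q : E × 𝕜 => f q.1 + q.2 • σ q.1)
      ((f' + t • σ') ∘L ContinuousLinearMap.fst 𝕜 E 𝕜) (p, t) := by
  have hfst : HasFDerivAt (Prod.fst : E × 𝕜 → E) (ContinuousLinearMap.fst 𝕜 E 𝕜) (p, t) :=
    hasFDerivAt_fst
  refine ((hf.comp (p, t) hfst).add (hasFDerivAt_snd.smul (hσ.comp (p, t) hfst))).congr_fderiv ?_
  ext v <;> simp [hσp]

theorem HasFDerivAt.mul_of_eq_zero_left {g h : E → 𝕜} {g' : E →L[𝕜] 𝕜} {p : E}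
    (hg : HasFDerivAt g g' p) (hh : DifferentiableAt 𝕜 h p) (hg0 : g p = 0) :
    HasFDerivAt (fun x => g x * h x) (h p • g') p := by
  refine (hg.fun_mul hh.hasFDerivAt).congr_fderiv ?_
  ext v
  simp [hg0]

theorem HasFDerivAt.piLp_apply_eq {ι : Type*} [Fintype ι] {G : ι → Type*}
    [∀ i, NormedAddCommGroup (G i)] [∀ i, NormedSpace 𝕜 (G i)] {q : ENNReal} [Fact (1 ≤ q)]
    {f : E → PiLp q G} {f' : E →L[𝕜] PiLp q G} {x : E} {i : ι} {φ : E →L[𝕜] G i}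
    (hf : HasFDerivAt f f' x) (hi : HasFDerivAt (fun y => f y i) φ x) (v : E) :
    f' v i = φ v := by
  have h := (PiLp.hasFDerivAt_apply (𝕜 := 𝕜) q (f x) i).comp x hf
  exact congrArg (· v) (h.unique hi)

end Calculus

theorem LinearMap.ker_comp_fst_of_injective {R E F : Type*} [Ring R] [AddCommGroup E]
    [Module R E] [AddCommGroup F] [Module R F] {A : E →ₗ[R] F} (hA : Function.Injective A) :
    LinearMap.ker (A ∘ₗ LinearMap.fst R E R) = Submodule.span R {((0, 1) : E × R)} := by
  rw [LinearMap.ker_comp, LinearMap.ker_eq_bot.mpr hA, Submodule.comap_bot, LinearMap.ker_fst,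
    LinearMap.span_singleton_eq_range]
  congr 1
  ext <;> simp

section CuspNormalForm

variable {k m : ℕ}

theorem hasFDerivAt_px (p : Dom k m) (j : Fin (2 * k)) :
    HasFDerivAt (px · j) (EuclideanSpace.proj (Sum.inl j) : Dom k m →L[ℝ] ℝ) p :=
  PiLp.hasFDerivAt_apply 2 p _

theorem hasFDerivAt_py (p : Dom k m) :
    HasFDerivAt py (EuclideanSpace.proj (Sum.inr (Sum.inl ())) : Dom k m →L[ℝ] ℝ) p :=
  PiLp.hasFDerivAt_apply 2 p _

theorem hasFDerivAt_pz (p : Dom k m) :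
    HasFDerivAt pz (EuclideanSpace.proj (Sum.inr (Sum.inr (Sum.inl ()))) : Dom k m →L[ℝ] ℝ) p :=
  PiLp.hasFDerivAt_apply 2 p _

theorem hasFDerivAt_ps (p : Dom k m) (j : Fin m) :
    HasFDerivAt (ps · j) (EuclideanSpace.proj (Sum.inr (Sum.inr (Sum.inr j))) : Dom k m →L[ℝ] ℝ)
      p :=
  PiLp.hasFDerivAt_apply 2 p _

@[fun_prop] theorem differentiable_px (j : Fin (2 * k)) :
    Differentiable ℝ (px · j : Dom k m → ℝ) :=
  fun p => (hasFDerivAt_px p j).differentiableAt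

@[fun_prop] theorem differentiable_py : Differentiable ℝ (py : Dom k m → ℝ) :=
  fun p => (hasFDerivAt_py p).differentiableAt

@[fun_prop] theorem differentiable_pz : Differentiable ℝ (pz : Dom k m → ℝ) :=
  fun p => (hasFDerivAt_pz p).differentiableAt

@[fun_prop] theorem differentiable_ps (j : Fin m) : Differentiable ℝ (ps · j : Dom k m → ℝ) :=
  fun p => (hasFDerivAt_ps p j).differentiableAt

theorem differentiable_cuspF : Differentiable ℝ (cuspF k m) := by
  rw [differentiable_piLp]
  rintro (j | _ | _ | j)
  · induction j using Fin.lastCases <;>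
      simp only [cuspF, PiLp.continuousLinearEquiv_symm_apply, Fin.val_last, Fin.val_castSucc,
        Fin.is_lt, lt_self_iff_false, ↓reduceDIte, Fin.eta] <;>
      fun_prop
  all_goals simp only [cuspF, PiLp.continuousLinearEquiv_symm_apply]; fun_prop

theorem differentiable_sigmaF : Differentiable ℝ (sigmaF k m) := by
  rw [differentiable_piLp]
  rintro (j | _ | _ | j)
  · induction j using Fin.lastCases
    all_goals
      simp only [sigmaF, div_eq_mul_inv, PiLp.continuousLinearEquiv_symm_apply, Fin.val_last,
        Fin.val_castSucc, Fin.is_lt, lt_self_iff_false, ↓reduceDIte]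
      try split_ifs
      all_goals fun_prop (disch := intros; positivity)
  all_goals
    simp only [sigmaF, div_eq_mul_inv, PiLp.continuousLinearEquiv_symm_apply]
    fun_prop (disch := intros; positivity)

theorem sigmaF_pOfS (s : Fin m → ℝ) : sigmaF k m (pOfS k m s) = 0 := by
  ext (_ | _ | _ | _) <;> simp [sigmaF, pOfS, pz, px]

theorem fderiv_cuspF_apply_x (p v : Dom k m) (j : Fin (2 * k)) :
    fderiv ℝ (cuspF k m) p v (Sum.inl j.castSucc) = px v j :=
  differentiable_cuspF.differentiableAt.hasFDerivAt.piLp_apply_eq (i := Sum.inl j.castSucc)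
    (by simpa [cuspF] using hasFDerivAt_px p j) v

theorem fderiv_cuspF_apply_y (p v : Dom k m) :
    fderiv ℝ (cuspF k m) p v (Sum.inl (Fin.last _)) = py v :=
  differentiable_cuspF.differentiableAt.hasFDerivAt.piLp_apply_eq (i := Sum.inl (Fin.last _))
    (by simpa [cuspF] using hasFDerivAt_py p) v

theorem fderiv_cuspF_apply_s (p v : Dom k m) (j : Fin m) :
    fderiv ℝ (cuspF k m) p v (Sum.inr (Sum.inr (Sum.inr j))) = ps v j :=
  differentiable_cuspF.differentiableAt.hasFDerivAt.piLp_apply_eq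
    (i := Sum.inr (Sum.inr (Sum.inr j))) (by simpa [cuspF] using hasFDerivAt_ps p j) v

theorem fderiv_cuspF_pOfS_apply_z (s : Fin m → ℝ) (v : Dom k m) :
    fderiv ℝ (cuspF k m) (pOfS k m s) v (Sum.inr (Sum.inr (Sum.inl ()))) = 0 := by
  have hZ : (fun p => cuspF k m p (Sum.inr (Sum.inr (Sum.inl ())))) =
      fun p => pz p * (py p + pz p ^ 2) := by
    funext p; simp only [cuspF, PiLp.continuousLinearEquiv_symm_apply]; ring
  have h := (hasFDerivAt_pz (pOfS k m s)).mul_of_eq_zero_left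
    (h := fun p => py p + pz p ^ 2) (by fun_prop) rfl
  rw [← hZ] at h
  simpa [py, pz, pOfS] using differentiable_cuspF.differentiableAt.hasFDerivAt.piLp_apply_eq h v

theorem fderiv_sigmaF_apply_s (p v : Dom k m) (j : Fin m) :
    fderiv ℝ (sigmaF k m) p v (Sum.inr (Sum.inr (Sum.inr j))) = 0 :=
  differentiable_sigmaF.differentiableAt.hasFDerivAt.piLp_apply_eq
    (i := Sum.inr (Sum.inr (Sum.inr j))) (by simpa [sigmaF] using hasFDerivAt_const 0 p) v

theorem fderiv_sigmaF_pOfS_apply_z (s : Fin m → ℝ) (v : Dom k m) :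
    fderiv ℝ (sigmaF k m) (pOfS k m s) v (Sum.inr (Sum.inr (Sum.inl ()))) = 6 * pz v := by
  have hZ : (fun p => sigmaF k m p (Sum.inr (Sum.inr (Sum.inl ())))) =
      fun p => pz p * (6 * (1 + pz p ^ 2)⁻¹) := by
    funext p; simp only [sigmaF, PiLp.continuousLinearEquiv_symm_apply]; ring
  have h := (hasFDerivAt_pz (pOfS k m s)).mul_of_eq_zero_left
    (h := fun p => 6 * (1 + pz p ^ 2)⁻¹) (by fun_prop (disch := positivity)) rfl
  rw [← hZ] at h
  simpa [pz, pOfS] using differentiable_sigmaF.differentiableAt.hasFDerivAt.piLp_apply_eq h v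

theorem fderiv_sigmaF_pOfS_apply_x (s : Fin m → ℝ) (v : Dom k m) (j : Fin (2 * k + 1)) :
    fderiv ℝ (sigmaF k m) (pOfS k m s) v (Sum.inl j) = 0 := by
  obtain ⟨h, hσ, hh, hh0⟩ : ∃ h : Dom k m → ℝ,
      (fun p => sigmaF k m p (Sum.inl j)) = (fun p => pz p * h p) ∧ Differentiable ℝ h ∧
        h (pOfS k m s) = 0 := by
    induction j using Fin.lastCases with
    | last =>
      refine ⟨fun p => -6 * pz p * (1 + pz p ^ 2)⁻¹, ?_, ?_, by simp [pz, pOfS]⟩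
      · funext p
        simp only [sigmaF, PiLp.continuousLinearEquiv_symm_apply, Fin.val_last, lt_self_iff_false,
          ↓reduceDIte]
        ring
      · fun_prop (disch := intros; positivity)
    | cast j =>
      by_cases hj : j.1 % 2 = 0
      · refine ⟨fun p => -2 * px p ⟨j + 1, by omega⟩ * (1 + pz p ^ 2 + pz p ^ 4)⁻¹, ?_, ?_,
          by simp [px, pOfS]⟩
        · funext p
          simp only [sigmaF, PiLp.continuousLinearEquiv_symm_apply, Fin.val_castSucc, Fin.is_lt,
            ↓reduceDIte, hj]
          ring
        · fun_prop (disch := intros; positivity)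
      · refine ⟨fun p => -2 * pz p * px p j * (1 + pz p ^ 2 + pz p ^ 4)⁻¹, ?_, ?_,
          by simp [pz, pOfS]⟩
        · funext p
          simp only [sigmaF, PiLp.continuousLinearEquiv_symm_apply, Fin.val_castSucc, Fin.is_lt,
            ↓reduceDIte, hj, Fin.eta]
          ring
        · fun_prop (disch := intros; positivity)
  have h := (hasFDerivAt_pz (pOfS k m s)).mul_of_eq_zero_left (hh _) rfl
  rw [← hσ] at h
  simpa [hh0] using differentiable_sigmaF.differentiableAt.hasFDerivAt.piLp_apply_eq h v

theorem injective_fderiv_cuspF_add_smul_fderiv_sigmaF (s : Fin m → ℝ) {t : ℝ} (ht : t ≠ 0) :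
    Function.Injective
      (fderiv ℝ (cuspF k m) (pOfS k m s) + t • fderiv ℝ (sigmaF k m) (pOfS k m s)) := by
  rw [injective_iff_map_eq_zero]
  intro v hv
  have hq : ∀ q, fderiv ℝ (cuspF k m) (pOfS k m s) v q +
      t * fderiv ℝ (sigmaF k m) (pOfS k m s) v q = 0 := fun q => by
    simpa using congrArg (· q) hv
  ext (j | _ | _ | j)
  · simpa [fderiv_cuspF_apply_x, fderiv_sigmaF_pOfS_apply_x, px] using hq (Sum.inl j.castSucc)
  · simpa [fderiv_cuspF_apply_y, fderiv_sigmaF_pOfS_apply_x, py] using hq (Sum.inl (Fin.last _))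
  · simpa [fderiv_cuspF_pOfS_apply_z, fderiv_sigmaF_pOfS_apply_z, ht, pz]
      using hq (Sum.inr (Sum.inr (Sum.inl ())))
  · simpa [fderiv_cuspF_apply_s, fderiv_sigmaF_apply_s, ps]
      using hq (Sum.inr (Sum.inr (Sum.inr j)))

end CuspNormalForm

theorem statement7_general (k m : ℕ) (s : Fin m → ℝ) (t : ℝ) (ht : t ≠ 0) :
    LinearMap.ker ((fderiv ℝ (ftilde k m) (pOfS k m s, t)) : Dom k m × ℝ →ₗ[ℝ] Cod k m) =
      Submodule.span ℝ {((0, 1) : Dom k m × ℝ)} := by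
  have hD : HasFDerivAt (ftilde k m) _ (pOfS k m s, t) :=
    differentiable_cuspF.differentiableAt.hasFDerivAt.add_smul_of_eq_zero
      differentiable_sigmaF.differentiableAt.hasFDerivAt (sigmaF_pOfS s) t
  rw [hD.fderiv]
  exact LinearMap.ker_comp_fst_of_injective (injective_fderiv_cuspF_add_smul_fderiv_sigmaF s ht)

/-- for every `s ∈ ℝᵐ` and every `t ≠ 0`, the kernel of `Df̃_{((0,0,0,s),t)}`
is exactly the one-dimensional span of `(0, 1)`. -/
theorem statement7 (k m : ℕ) (hk : 1 ≤ k) (s : Fin m → ℝ) (t : ℝ) (ht : t ≠ 0) :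
    LinearMap.ker ((fderiv ℝ (ftilde k m) (pOfS k m s, t)) : Dom k m × ℝ →ₗ[ℝ] Cod k m) =
      Submodule.span ℝ {((0, 1) : Dom k m × ℝ)} :=
  statement7_general k m s t ht
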